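/- For a hyperbolic triangle with side lengths r₁+r₂, r₂+r₃, r₃+r₁ and angles θ_i: as (r₁, r₂, r₃) → (0,0,0), the angle sum θ₁ + θ₂ + θ₃ tends to π. -/

import Mathlib

/-!
Write `sinh t = t · σ(t)` with `σ = dslope sinh 0` continuous and `σ(0) = 1`. Since
`cosh(x+y) cosh(x+z) - cosh(y+z) = sinh x sinh(x+y+z) - sinh y sinh z`, the hyperbolic cosine
of the angle at `x` is `(a u - b v) / ((a + b) w)` with `a = x(x+y+z)`, `b = yz` and `u, v, w`
products of values of `σ`, while the Euclidean one is `(a - b) / (a + b)`. As `a, b ≥ 0`, the two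
differ by at most `|u/w - 1| + |v/w - 1| → 0`, uniformly in the (unbounded) ratio `a / b`.
Uniform continuity of `arccos` transfers this to the angles, and the three Euclidean angles
sum to `π`.
-/

open Real Filter Topology

/-- The angle at the vertex of radius `x` in the hyperbolic triangle with side
lengths `x+y`, `x+z`, `y+z` (hyperbolic circle packing triangle). -/
noncomputable def hypPackAngle (x y z : ℝ) : ℝ :=
  Real.arccos ((Real.cosh (x + y) * Real.cosh (x + z) - Real.cosh (y + z)) /
    (Real.sinh (x + y) * Real.sinh (x + z)))

open Set

theorem uniformContinuous_arccos : UniformContinuous arccos :=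
  uniformContinuous_const.sub <| uniformContinuous_subtype_val.comp <|
    (CompactSpace.uniformContinuous_of_continuous sinOrderIso.symm.continuous).comp
      (LipschitzWith.projIcc _).uniformContinuous

theorem UniformContinuous.tendsto_sub_zero {ι E F : Type*} [SeminormedAddCommGroup E]
    [SeminormedAddCommGroup F] {f : E → F} (hf : UniformContinuous f) {l : Filter ι}
    {u v : ι → E} (h : Tendsto (fun i => u i - v i) l (𝓝 0)) :
    Tendsto (fun i => f (u i) - f (v i)) l (𝓝 0) := by
  rw [tendsto_zero_iff_norm_tendsto_zero] at h ⊢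
  simp only [← dist_eq_norm] at h ⊢
  exact tendsto_uniformity_iff_dist_tendsto_zero.1
    (Tendsto.comp hf (tendsto_uniformity_iff_dist_tendsto_zero (f := fun i => (u i, v i)).2 h))

theorem arccos_add_arccos_add_arccos_eq_pi {a b c : ℝ} (ha : a ∈ Icc (-1) 1)
    (hb : b ∈ Icc (-1) 1) (hc : c ∈ Icc (-1) 1) (hbc : 0 ≤ b + c) (hsin : 0 ≤ b * c + a)
    (h : a ^ 2 + b ^ 2 + c ^ 2 + 2 * a * b * c = 1) :
    arccos a + arccos b + arccos c = π := by
  have hBC : arccos b + arccos c ≤ π := by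
    have := arccos_le_arccos (show -c ≤ b by linarith)
    rw [arccos_neg] at this
    linarith
  have hsin_mul : sin (arccos b) * sin (arccos c) = b * c + a := by
    rw [sin_arccos, sin_arccos, ← sqrt_mul (by nlinarith [hb.1, hb.2]),
      show (1 - b ^ 2) * (1 - c ^ 2) = (b * c + a) ^ 2 by linear_combination -h, sqrt_sq hsin]
  have hcos : cos (arccos b + arccos c) = cos (π - arccos a) := by
    rw [cos_add, hsin_mul, cos_pi_sub, cos_arccos hb.1 hb.2, cos_arccos hc.1 hc.2,
      cos_arccos ha.1 ha.2]
    ring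
  have := injOn_cos ⟨add_nonneg (arccos_nonneg b) (arccos_nonneg c), hBC⟩
    ⟨by linarith [arccos_le_pi a], by linarith [arccos_nonneg a]⟩ hcos
  linarith

/-- Law of cosines: the cosine of the angle at `x` of the Euclidean triangle with sides
`x + y`, `x + z`, `y + z`. -/
noncomputable def eucPackCos (x y z : ℝ) : ℝ :=
  (x * (x + y + z) - y * z) / ((x + y) * (x + z))

section Euclidean

variable {x y z : ℝ}

theorem eucPackCos_mem_Icc (hx : 0 ≤ x) (hy : 0 ≤ y) (hz : 0 ≤ z) :
    eucPackCos x y z ∈ Icc (-1) 1 := by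
  rw [eucPackCos, mem_Icc, ← abs_le, abs_div,
    abs_of_nonneg (by positivity : 0 ≤ (x + y) * (x + z))]
  refine div_le_one_of_le₀ (abs_le.2 ⟨?_, ?_⟩) (by positivity) <;>
    nlinarith [mul_nonneg hx hy, mul_nonneg hy hz, mul_nonneg hx hz]

theorem eucPackCos_sq_add_sq_add_sq (hx : 0 < x) (hy : 0 < y) (hz : 0 < z) :
    eucPackCos x y z ^ 2 + eucPackCos y x z ^ 2 + eucPackCos z x y ^ 2 +
      2 * eucPackCos x y z * eucPackCos y x z * eucPackCos z x y = 1 := by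
  simp only [eucPackCos]
  field_simp
  ring

theorem eucPackCos_add_eucPackCos (hx : 0 < x) (hy : 0 < y) (hz : 0 < z) :
    eucPackCos y x z + eucPackCos z x y =
      2 * y * z * (2 * x + y + z) / ((x + y) * (x + z) * (y + z)) := by
  simp only [eucPackCos]
  field_simp
  ring

theorem eucPackCos_mul_add_eucPackCos (hx : 0 < x) (hy : 0 < y) (hz : 0 < z) :
    eucPackCos y x z * eucPackCos z x y + eucPackCos x y z =
      4 * x * y * z * (x + y + z) / ((x + y) * (x + z) * (y + z) ^ 2) := by
  simp only [eucPackCos]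
  field_simp
  ring

theorem arccos_eucPackCos_add (hx : 0 < x) (hy : 0 < y) (hz : 0 < z) :
    arccos (eucPackCos x y z) + arccos (eucPackCos y x z) + arccos (eucPackCos z x y) = π :=
  arccos_add_arccos_add_arccos_eq_pi (eucPackCos_mem_Icc hx.le hy.le hz.le)
    (eucPackCos_mem_Icc hy.le hx.le hz.le) (eucPackCos_mem_Icc hz.le hx.le hy.le)
    (by rw [eucPackCos_add_eucPackCos hx hy hz]; positivity)
    (by rw [eucPackCos_mul_add_eucPackCos hx hy hz]; positivity)
    (eucPackCos_sq_add_sq_add_sq hx hy hz)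

end Euclidean

theorem sinh_eq_mul_dslope (t : ℝ) : sinh t = t * dslope sinh 0 t := by
  rcases eq_or_ne t 0 with rfl | ht
  · simp
  · rw [dslope_of_ne _ ht, slope_def_field, sinh_zero, sub_zero, sub_zero,
      mul_div_cancel₀ _ ht]

theorem tendsto_dslope_sinh : Tendsto (dslope sinh 0) (𝓝 0) (𝓝 1) := by
  have := continuousAt_dslope_same.2 (differentiable_sinh 0)
  rwa [ContinuousAt, dslope_same, Real.deriv_sinh, cosh_zero] at this

theorem cosh_mul_cosh_sub_cosh (x y z : ℝ) :
    cosh (x + y) * cosh (x + z) - cosh (y + z) =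
      sinh x * sinh (x + y + z) - sinh y * sinh z := by
  simp only [cosh_add, sinh_add]
  linear_combination (cosh y * cosh z) * cosh_sq x

noncomputable def hypPackCos (x y z : ℝ) : ℝ :=
  (cosh (x + y) * cosh (x + z) - cosh (y + z)) / (sinh (x + y) * sinh (x + z))

theorem hypPackCos_eq (x y z : ℝ) :
    hypPackCos x y z =
      (x * (x + y + z) * (dslope sinh 0 x * dslope sinh 0 (x + y + z)) -
          y * z * (dslope sinh 0 y * dslope sinh 0 z)) /
        ((x * (x + y + z) + y * z) * (dslope sinh 0 (x + y) * dslope sinh 0 (x + z))) := by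
  rw [hypPackCos, cosh_mul_cosh_sub_cosh]
  simp only [sinh_eq_mul_dslope x, sinh_eq_mul_dslope y, sinh_eq_mul_dslope z,
    sinh_eq_mul_dslope (x + y), sinh_eq_mul_dslope (x + z), sinh_eq_mul_dslope (x + y + z)]
  ring

theorem abs_div_sub_div_le {a b : ℝ} (ha : 0 ≤ a) (hb : 0 ≤ b) (u v w : ℝ) :
    |(a * u - b * v) / ((a + b) * w) - (a - b) / (a + b)| ≤ |u / w - 1| + |v / w - 1| := by
  have hsplit : (a * u - b * v) / ((a + b) * w) - (a - b) / (a + b) =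
      a / (a + b) * (u / w - 1) - b / (a + b) * (v / w - 1) := by
    rw [sub_div, sub_div, mul_div_mul_comm, mul_div_mul_comm]; ring
  have hA : |a / (a + b)| ≤ 1 := by
    rw [abs_of_nonneg (by positivity)]; exact div_le_one_of_le₀ (by linarith) (by positivity)
  have hB : |b / (a + b)| ≤ 1 := by
    rw [abs_of_nonneg (by positivity)]; exact div_le_one_of_le₀ (by linarith) (by positivity)
  rw [hsplit]
  calc _ ≤ |a / (a + b)| * |u / w - 1| + |b / (a + b)| * |v / w - 1| := by
        rw [← abs_mul, ← abs_mul]; exact abs_sub _ _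
    _ ≤ |u / w - 1| + |v / w - 1| := by
        gcongr <;> exact mul_le_of_le_one_left (abs_nonneg _) ‹_›

section Limits

variable {ι : Type*} {l : Filter ι} {x y z : ι → ℝ}

theorem tendsto_hypPackCos_sub_eucPackCos (hx : Tendsto x l (𝓝 0))
    (hy : Tendsto y l (𝓝 0)) (hz : Tendsto z l (𝓝 0)) (hx₀ : ∀ᶠ i in l, 0 ≤ x i)
    (hy₀ : ∀ᶠ i in l, 0 ≤ y i) (hz₀ : ∀ᶠ i in l, 0 ≤ z i) :
    Tendsto (fun i => hypPackCos (x i) (y i) (z i) - eucPackCos (x i) (y i) (z i))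
      l (𝓝 0) := by
  have hσσ {s t : ι → ℝ} (hs : Tendsto s l (𝓝 0)) (ht : Tendsto t l (𝓝 0)) :
      Tendsto (fun i => dslope sinh 0 (s i) * dslope sinh 0 (t i)) l (𝓝 1) := by
    simpa using (tendsto_dslope_sinh.comp hs).mul (tendsto_dslope_sinh.comp ht)
  have hxy : Tendsto (fun i => x i + y i) l (𝓝 0) := by simpa using hx.add hy
  have hxz : Tendsto (fun i => x i + z i) l (𝓝 0) := by simpa using hx.add hz
  have hs : Tendsto (fun i => x i + y i + z i) l (𝓝 0) := by simpa using hxy.add hz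
  have hratio {u v : ι → ℝ} (hu : Tendsto u l (𝓝 1)) (hv : Tendsto v l (𝓝 1)) :
      Tendsto (fun i => |u i / v i - 1|) l (𝓝 0) := by
    simpa using ((hu.div hv one_ne_zero).sub_const 1).abs
  have hw := hσσ hxy hxz
  refine squeeze_zero_norm' ?_ (((hratio (hσσ hx hs) hw).add
    (hratio (hσσ hy hz) hw)).trans_eq (by rw [add_zero]))
  filter_upwards [hx₀, hy₀, hz₀] with i hxi hyi hzi
  rw [Real.norm_eq_abs, hypPackCos_eq, eucPackCos,
    show (x i + y i) * (x i + z i) = x i * (x i + y i + z i) + y i * z i by ring]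
  exact abs_div_sub_div_le (by positivity) (by positivity) _ _ _

theorem tendsto_hypPackAngle_sub_arccos_eucPackCos (hx : Tendsto x l (𝓝 0))
    (hy : Tendsto y l (𝓝 0)) (hz : Tendsto z l (𝓝 0)) (hx₀ : ∀ᶠ i in l, 0 ≤ x i)
    (hy₀ : ∀ᶠ i in l, 0 ≤ y i) (hz₀ : ∀ᶠ i in l, 0 ≤ z i) :
    Tendsto (fun i => hypPackAngle (x i) (y i) (z i) - arccos (eucPackCos (x i) (y i) (z i)))
      l (𝓝 0) :=
  uniformContinuous_arccos.tendsto_sub_zero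
    (tendsto_hypPackCos_sub_eucPackCos hx hy hz hx₀ hy₀ hz₀)

end Limits

theorem hyp_pack_angle_sum_tendsto_pi :
    Tendsto (fun p : ℝ × ℝ × ℝ =>
        hypPackAngle p.1 p.2.1 p.2.2 + hypPackAngle p.2.1 p.1 p.2.2 +
          hypPackAngle p.2.2 p.1 p.2.1)
      (nhdsWithin (0, 0, 0) {p : ℝ × ℝ × ℝ | 0 < p.1 ∧ 0 < p.2.1 ∧ 0 < p.2.2})
      (nhds π) := by
  set S := {p : ℝ × ℝ × ℝ | 0 < p.1 ∧ 0 < p.2.1 ∧ 0 < p.2.2}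
  have hpos : ∀ᶠ p in 𝓝[S] (0, 0, 0), p ∈ S := self_mem_nhdsWithin
  have h₁ : Tendsto (fun p : ℝ × ℝ × ℝ => p.1) (𝓝[S] (0, 0, 0)) (𝓝 0) :=
    continuous_fst.continuousWithinAt
  have h₂ : Tendsto (fun p : ℝ × ℝ × ℝ => p.2.1) (𝓝[S] (0, 0, 0)) (𝓝 0) :=
    (continuous_fst.comp continuous_snd).continuousWithinAt
  have h₃ : Tendsto (fun p : ℝ × ℝ × ℝ => p.2.2) (𝓝[S] (0, 0, 0)) (𝓝 0) :=
    (continuous_snd.comp continuous_snd).continuousWithinAt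
  have h₁₀ := hpos.mono fun p hp => hp.1.le
  have h₂₀ := hpos.mono fun p hp => hp.2.1.le
  have h₃₀ := hpos.mono fun p hp => hp.2.2.le
  have hdiff := ((tendsto_hypPackAngle_sub_arccos_eucPackCos h₁ h₂ h₃ h₁₀ h₂₀ h₃₀).add
    (tendsto_hypPackAngle_sub_arccos_eucPackCos h₂ h₁ h₃ h₂₀ h₁₀ h₃₀)).add
    (tendsto_hypPackAngle_sub_arccos_eucPackCos h₃ h₁ h₂ h₃₀ h₁₀ h₂₀)
  have hlim := hdiff.add_const π
  rw [add_zero, add_zero, zero_add] at hlim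
  refine hlim.congr' ?_
  filter_upwards [hpos] with p ⟨hp₁, hp₂, hp₃⟩
  linarith [arccos_eucPackCos_add hp₁ hp₂ hp₃]
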